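/- arXiv:1803.06168 — 4 statements merged into one kernel-verified Lean document; each statement's English description precedes it below -/
import Mathlib

section
/- The block decomposition is a left inverse of flattening restricted to alternating lists: if w is a list of nonempty lists over Σ + Γ, each homogeneous (entirely in Σ or entirely in Γ), which alternates between the two sides, then block(flat(w)) = w. -/
private lemma alt_unique {γ : Type*} (p : γ → Bool) :
    ∀ w v : List (List γ),
    (∀ b ∈ w, b ≠ [] ∧ ∃ s, ∀ a ∈ b, p a = s) →
    (∀ b ∈ v, b ≠ [] ∧ ∃ s, ∀ a ∈ b, p a = s) →
    List.Chain' (fun b c => ∀ a ∈ b, ∀ a' ∈ c, p a ≠ p a') w →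
    List.Chain' (fun b c => ∀ a ∈ b, ∀ a' ∈ c, p a ≠ p a') v →
    w.flatten = v.flatten → w = v := by
  intro w
  induction w with
  | nil =>
    intro v _ hv _ _ hj
    cases v with
    | nil => rfl
    | cons c v' =>
      exfalso
      have hc := (hv c (by simp)).1
      simp at hj
      exact hc hj.1
  | cons b w' ih =>
    intro v hw hv hcw hcv hj
    cases v with
    | nil =>
      exfalso
      have hb := (hw b (by simp)).1
      simp at hj
      exact hb hj.1
    | cons c v' =>
      simp only [List.flatten_cons] at hj
      -- show b = c
      have hbc : b = c := by
        rcases List.append_eq_append_iff.mp hj with ⟨t, hct, hX⟩ | ⟨t, hbt, hY⟩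
        · -- c = b ++ t
          cases t with
          | nil => simpa using hct.symm
          | cons a t' =>
            exfalso
            -- head a of t is in first block of w'
            obtain ⟨hb0, s, hbs⟩ := hw b (by simp)
            obtain ⟨hc0, sc, hcs⟩ := hv c (by simp)
            cases w' with
            | nil => simp at hX
            | cons d w'' =>
              have hd0 := (hw d (by simp)).1
              cases d with
              | nil => exact hd0 rfl
              | cons a0 d' =>
                simp only [List.flatten_cons, List.cons_append] at hX
                have ha : a = a0 := by exact (List.cons.injEq ..▸ hX).1.symm
                have hrel := (List.isChain_cons_cons.mp hcw).1
                cases b with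
                | nil => exact hb0 rfl
                | cons x b' =>
                  have h1 : p x ≠ p a0 := hrel x (by simp) a0 (by simp)
                  have h2 : p x = sc := hcs x (by rw [hct]; simp)
                  have h3 : p a = sc := hcs a (by rw [hct]; simp)
                  exact h1 (by rw [h2, ← ha, h3])
        · -- b = c ++ t
          cases t with
          | nil => simpa using hbt
          | cons a t' =>
            exfalso
            obtain ⟨hb0, s, hbs⟩ := hw b (by simp)
            obtain ⟨hc0, sc, hcs⟩ := hv c (by simp)
            cases v' with
            | nil => simp at hY
            | cons d v'' =>
              have hd0 := (hv d (by simp)).1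
              cases d with
              | nil => exact hd0 rfl
              | cons a0 d' =>
                simp only [List.flatten_cons, List.cons_append] at hY
                have ha : a = a0 := by exact (List.cons.injEq ..▸ hY).1.symm
                have hrel := (List.isChain_cons_cons.mp hcv).1
                cases c with
                | nil => exact hc0 rfl
                | cons x c' =>
                  have h1 : p x ≠ p a0 := hrel x (by simp) a0 (by simp)
                  have h2 : p x = s := hbs x (by rw [hbt]; simp)
                  have h3 : p a = s := hbs a (by rw [hbt]; simp)
                  exact h1 (by rw [h2, ← ha, h3])
      subst hbc
      have hj' : w'.flatten = v'.flatten := by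
        have := List.append_cancel_left hj
        exact this
      have := ih v' (fun x hx => hw x (by simp [hx]))
        (fun x hx => hv x (by simp [hx])) hcw.tail hcv.tail hj'
      rw [this]

private lemma hom_iff {α β : Type*} (b : List (α ⊕ β)) :
    ((∀ a ∈ b, a.isLeft = true) ∨ (∀ a ∈ b, a.isRight = true)) ↔
    ∃ s, ∀ a ∈ b, a.isLeft = s := by
  constructor
  · rintro (h | h)
    · exact ⟨true, h⟩
    · exact ⟨false, fun a ha => by have := h a ha; cases a <;> simp_all⟩
  · rintro ⟨s, hs⟩
    cases s
    · exact Or.inr fun a ha => by have := hs a ha; cases a <;> simp_all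
    · exact Or.inl hs

/-- If `block` is a function producing, for every list over `Σ ⊕ Γ`, an
alternating decomposition into nonempty homogeneous blocks whose concatenation is the
input, then `block` is a left inverse of flattening on alternating lists of nonempty
homogeneous blocks: `block (flat w) = w`. -/
theorem stmt_5 {α β : Type*}
    (block : List (α ⊕ β) → List (List (α ⊕ β)))
    (hblock : ∀ x : List (α ⊕ β),
      (block x).flatten = x ∧
      (∀ b ∈ block x, b ≠ [] ∧
        ((∀ a ∈ b, a.isLeft = true) ∨ (∀ a ∈ b, a.isRight = true))) ∧
      List.Chain' (fun b c => ∀ a ∈ b, ∀ a' ∈ c, a.isLeft ≠ a'.isLeft) (block x))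
    (w : List (List (α ⊕ β)))
    (hw : ∀ b ∈ w, b ≠ [] ∧ ((∀ a ∈ b, a.isLeft = true) ∨ (∀ a ∈ b, a.isRight = true)))
    (halt : List.Chain' (fun b c => ∀ a ∈ b, ∀ a' ∈ c, a.isLeft ≠ a'.isLeft) w) :
    block w.flatten = w := by
  obtain ⟨hj, hhom, hch⟩ := hblock w.flatten
  exact alt_unique Sum.isLeft (block w.flatten) w
    (fun b hb => ⟨(hhom b hb).1, (hom_iff b).mp (hhom b hb).2⟩)
    (fun b hb => ⟨(hw b hb).1, (hom_iff b).mp (hw b hb).2⟩)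
    hch halt hj
end

section
/- Let h : Σ⁺ → S be a semigroup homomorphism into a finite semigroup S. Define an h-factorisation to be a finite tree whose leaves are labeled by elements of Σ, whose internal nodes are labeled by elements of S, such that: the parent of a leaf labeled a is labeled h(a) and has only that leaf as child; every other internal node has at least two children and is labeled by the product of its children's labels; and any node with at least three children has all children carrying the same label. Then if S is aperiodic, there exists k (depending only on S) such that every nonempty word w ∈ Σ⁺ admits an h-factorisation of depth at most k whose yield (sequence of leaf labels left to right) equals w. -/
/-- `spow s n` is the `(n+1)`-fold product of `s` with itself, i.e. `s^(n+1)`. -/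
def spow {S : Type*} [Semigroup S] (s : S) : ℕ → S
  | 0 => s
  | n + 1 => spow s n * s

/-- Finite unranked trees with leaves labelled in `α` and internal nodes labelled
in `β`. -/
inductive FTree (α β : Type*) : Type _ where
  | leaf : α → FTree α β
  | node : β → List (FTree α β) → FTree α β

namespace FTree

variable {α β : Type*}

/-- The yield of a tree: the sequence of leaf labels, read left to right. -/
def yield : FTree α β → List α
  | .leaf a => [a]
  | .node _ ts => (ts.attach.map (fun t => yield t.1)).flatten
decreasing_by have := List.sizeOf_lt_of_mem t.2; simp; omega

/-- The depth of a tree: the maximal length of a root-to-leaf path. -/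
def depth : FTree α β → ℕ
  | .leaf _ => 0
  | .node _ ts => 1 + (ts.attach.map (fun t => depth t.1)).foldr max 0
decreasing_by have := List.sizeOf_lt_of_mem t.2; simp; omega

/-- The label of a tree, in `β`: internal nodes carry their own label, and a leaf
labelled `a` is (for the purposes of its parent) assigned `h a`. -/
def lbl (h : α → β) : FTree α β → β
  | .leaf a => h a
  | .node s _ => s

/-- Validity of an `h`-factorisation (for `h : α → β`, `β` a semigroup):
the parent of a leaf labelled `a` is labelled `h a` and has only that leaf as child;
every other internal node has at least two children (none of them leaves) and is
labelled by the semigroup product of its children's labels; and a node with at least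
three children has all children with the same label. -/
inductive Valid [Semigroup β] (h : α → β) : FTree α β → Prop
  | leafParent (a : α) : Valid h (.node (h a) [.leaf a])
  | internal (s : β) (ts : List (FTree α β)) :
      2 ≤ ts.length →
      (∀ t ∈ ts, Valid h t) →
      (∀ t ∈ ts, ∀ a : α, t ≠ FTree.leaf a) →
      (∀ (t : FTree α β) (rest : List (FTree α β)), ts = t :: rest →
        s = (rest.map (lbl h)).foldl (· * ·) (lbl h t)) →
      (3 ≤ ts.length → ∀ t₁ ∈ ts, ∀ t₂ ∈ ts, lbl h t₁ = lbl h t₂) →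
      Valid h (.node s ts)

end FTree

namespace FF
open FTree

/-! ### Basic FTree lemmas -/

variable {α S : Type*} [Semigroup S]

theorem yield_node (b : S) (ts : List (FTree α S)) :
    (FTree.node b ts).yield = (ts.map yield).flatten := by
  rw [yield]; congr 1; simp

theorem depth_node (b : S) (ts : List (FTree α S)) :
    (FTree.node b ts).depth = 1 + (ts.map depth).foldr max 0 := by
  rw [depth]; congr 2; simp

theorem foldr_max_le {l : List ℕ} {d : ℕ} (hl : ∀ x ∈ l, x ≤ d) : l.foldr max 0 ≤ d := by
  induction l with
  | nil => simp
  | cons a l ih =>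
    simp only [List.foldr_cons, max_le_iff]
    exact ⟨hl a (by simp), ih fun x hx => hl x (by simp [hx])⟩

theorem depth_node_le {b : S} {ts : List (FTree α S)} {d : ℕ}
    (hts : ∀ t ∈ ts, depth t ≤ d) : (FTree.node b ts).depth ≤ 1 + d := by
  rw [depth_node]
  have := foldr_max_le (l := ts.map depth) (d := d) (by simpa using hts)
  omega

def IsNode : FTree α S → Prop
  | .leaf _ => False
  | .node _ _ => True

theorem isNode_node (b : S) (ts : List (FTree α S)) : IsNode (FTree.node b ts) := trivial

theorem ne_leaf_of_isNode {t : FTree α S} (ht : IsNode t) : ∀ a : α, t ≠ FTree.leaf a := by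
  cases t with
  | leaf a => exact absurd ht (by simp [IsNode])
  | node b ts => simp

/-! ### Products in `WithOne S` -/

def P (h : α → S) (Ts : List (FTree α S)) : WithOne S :=
  (Ts.map (fun T => WithOne.coe (lbl h T))).prod

theorem P_nil (h : α → S) : P h [] = 1 := rfl

theorem P_cons (h : α → S) (T : FTree α S) (Ts : List (FTree α S)) :
    P h (T :: Ts) = WithOne.coe (lbl h T) * P h Ts := by simp [P]

theorem P_append (h : α → S) (A B : List (FTree α S)) :
    P h (A ++ B) = P h A * P h B := by simp [P]

theorem P_singleton (h : α → S) (T : FTree α S) : P h [T] = WithOne.coe (lbl h T) := by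
  simp [P]

theorem coe_foldl (a : S) (l : List S) :
    ((l.foldl (· * ·) a : S) : WithOne S) = ↑a * (l.map (fun x : S => (x : WithOne S))).prod := by
  induction l generalizing a with
  | nil => simp
  | cons b l ih => simp [List.foldl_cons, ih (a * b), mul_assoc]

theorem P_exists_coe (h : α → S) (Ts : List (FTree α S)) (hTs : Ts ≠ []) :
    ∃ x : S, (x : WithOne S) = P h Ts := by
  induction Ts with
  | nil => simp at hTs
  | cons T Ts ih =>
    cases Ts with
    | nil => exact ⟨lbl h T, by simp [P_cons, P_nil]⟩
    | cons U Us =>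
      obtain ⟨x, hx⟩ := ih (by simp)
      exact ⟨lbl h T * x, by rw [P_cons, ← hx]; simp⟩

/-! ### Green-type preorders on a monoid -/

section Green
variable {M : Type*} [Monoid M]

def Rle (x y : M) : Prop := ∃ u, x = y * u
def Lle (x y : M) : Prop := ∃ u, x = u * y
def Jle (x y : M) : Prop := ∃ u v, x = u * y * v
def Jrel (x y : M) : Prop := Jle x y ∧ Jle y x
def Rrel (x y : M) : Prop := Rle x y ∧ Rle y x
def Lrel (x y : M) : Prop := Lle x y ∧ Lle y x

theorem Rle.refl (x : M) : Rle x x := ⟨1, by simp⟩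
theorem Lle.refl (x : M) : Lle x x := ⟨1, by simp⟩
theorem Jle.refl (x : M) : Jle x x := ⟨1, 1, by simp⟩
theorem Rle.trans {x y z : M} (h1 : Rle x y) (h2 : Rle y z) : Rle x z := by
  obtain ⟨u, rfl⟩ := h1; obtain ⟨v, rfl⟩ := h2; exact ⟨v * u, by simp [mul_assoc]⟩
theorem Lle.trans {x y z : M} (h1 : Lle x y) (h2 : Lle y z) : Lle x z := by
  obtain ⟨u, rfl⟩ := h1; obtain ⟨v, rfl⟩ := h2; exact ⟨u * v, by simp [mul_assoc]⟩
theorem Jle.trans {x y z : M} (h1 : Jle x y) (h2 : Jle y z) : Jle x z := by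
  obtain ⟨u, v, rfl⟩ := h1; obtain ⟨p, q, rfl⟩ := h2
  exact ⟨u * p, q * v, by simp [mul_assoc]⟩
theorem Jle.of_Rle {x y : M} (h1 : Rle x y) : Jle x y := by
  obtain ⟨u, rfl⟩ := h1; exact ⟨1, u, by simp⟩
theorem Jle.of_Lle {x y : M} (h1 : Lle x y) : Jle x y := by
  obtain ⟨u, rfl⟩ := h1; exact ⟨u, 1, by simp⟩
theorem Jle.mul_left (x y : M) : Jle (x * y) y := ⟨x, 1, by simp⟩
theorem Jle.mul_right (x y : M) : Jle (x * y) x := ⟨1, y, by simp [mul_assoc]⟩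
theorem Rle.mul (x y : M) : Rle (x * y) x := ⟨y, rfl⟩
theorem Lle.mul (x y : M) : Lle (x * y) y := ⟨x, rfl⟩
theorem Jrel.refl (x : M) : Jrel x x := ⟨Jle.refl x, Jle.refl x⟩
theorem Jrel.symm {x y : M} (h : Jrel x y) : Jrel y x := ⟨h.2, h.1⟩
theorem Jrel.trans {x y z : M} (h1 : Jrel x y) (h2 : Jrel y z) : Jrel x z :=
  ⟨h1.1.trans h2.1, h2.2.trans h1.2⟩
theorem Rrel.refl (x : M) : Rrel x x := ⟨Rle.refl x, Rle.refl x⟩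
theorem Rrel.symm {x y : M} (h : Rrel x y) : Rrel y x := ⟨h.2, h.1⟩
theorem Rrel.trans {x y z : M} (h1 : Rrel x y) (h2 : Rrel y z) : Rrel x z :=
  ⟨h1.1.trans h2.1, h2.2.trans h1.2⟩

variable {n : ℕ} (hn1 : 1 ≤ n) (hn : ∀ x : M, x ^ n = x ^ (n + 1))

include hn in
theorem pow_stab (x : M) : ∀ k, n ≤ k → x ^ k = x ^ n := by
  intro k hk
  induction k with
  | zero => rw [Nat.le_zero.mp hk]
  | succ k ih =>
    rcases Nat.lt_or_ge k n with hlt | hge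
    · have : n = k + 1 := by omega
      rw [this]
    · rw [pow_succ, ih hge, ← pow_succ, ← hn]

include hn1 hn in
theorem aper_R {a b : M} (hab : Rle a b) (hj : Jle b a) : Rle b a := by
  obtain ⟨u, rfl⟩ := hab
  obtain ⟨p, q, hb⟩ := hj
  -- b = p * b * (u * q), iterate
  have hstep : b = p * b * (u * q) := by
    conv_lhs => rw [hb]
    simp [mul_assoc]
  have key : ∀ k : ℕ, b = p ^ k * b * (u * q) ^ k := by
    intro k
    induction k with
    | zero => simp
    | succ k ih =>
      calc b = p * b * (u*q) := hstep
        _ = p * (p ^ k * b * (u * q) ^ k) * (u*q) := by rw [← ih]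
        _ = p ^ (k+1) * b * (u * q) ^ (k+1) := by
            rw [pow_succ' p k, pow_succ (u*q) k]; simp [mul_assoc]
  have h1 : b = p ^ n * b * (u*q) ^ n := key n
  have h2 : b * (u*q)^n = b := by
    conv_lhs => rw [h1]
    rw [mul_assoc, ← pow_add, pow_stab hn (u*q) (n+n) (by omega), ← h1]
  obtain ⟨m, hm⟩ : ∃ m, n = m + 1 := ⟨n - 1, by omega⟩
  refine ⟨q * (u * q) ^ m, ?_⟩
  calc b = b * (u*q)^n := h2.symm
    _ = b * u * (q * (u*q)^m) := by
        rw [hm, pow_succ']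
        simp [mul_assoc]

include hn1 hn in
theorem aper_L {a b : M} (hab : Lle a b) (hj : Jle b a) : Lle b a := by
  obtain ⟨u, rfl⟩ := hab
  obtain ⟨p, q, hb⟩ := hj
  have hstep : b = (p*u) * b * q := by
    conv_lhs => rw [hb]
    simp [mul_assoc]
  have key : ∀ k : ℕ, b = (p * u) ^ k * b * q ^ k := by
    intro k
    induction k with
    | zero => simp
    | succ k ih =>
      calc b = (p*u) * b * q := hstep
        _ = (p*u) * ((p*u) ^ k * b * q ^ k) * q := by rw [← ih]
        _ = (p*u) ^ (k+1) * b * q ^ (k+1) := by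
            rw [pow_succ' (p*u) k, pow_succ q k]; simp [mul_assoc]
  have h1 : b = (p*u) ^ n * b * q ^ n := key n
  have h2 : (p*u)^n * b = b := by
    conv_lhs => rw [h1]
    rw [show (p*u)^n * ((p*u)^n * b * q^n) = (p*u)^n * (p*u)^n * b * q^n by simp [mul_assoc],
        ← pow_add, pow_stab hn (p*u) (n+n) (by omega), ← h1]
  obtain ⟨m, hm⟩ : ∃ m, n = m + 1 := ⟨n - 1, by omega⟩
  refine ⟨(p * u) ^ m * p, ?_⟩
  calc b = (p*u)^n * b := h2.symm
    _ = ((p*u)^m * p) * (u * b) := by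
        rw [hm, pow_succ]
        simp [mul_assoc]

include hn1 hn in
theorem aper_eq {a b : M} (h1 : Rle a b) (h2 : Lle b a) : a = b := by
  obtain ⟨u, hu⟩ := h1
  obtain ⟨v, hv⟩ := h2
  -- a = b * u = (v * a) * u
  have hstep : a = v * a * u := by
    conv_lhs => rw [hu, hv]
  have key : ∀ k : ℕ, a = v ^ k * a * u ^ k := by
    intro k
    induction k with
    | zero => simp
    | succ k ih =>
      calc a = v * a * u := hstep
        _ = v * (v ^ k * a * u ^ k) * u := by rw [← ih]
        _ = v ^ (k+1) * a * u ^ (k+1) := by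
            rw [pow_succ' v k, pow_succ u k]; simp [mul_assoc]
  have h3 : a = v * a := by
    conv_lhs => rw [key n]
    rw [hn v, pow_succ' v n]
    conv_rhs => rw [key n]
    simp [mul_assoc]
  rw [hv, ← h3]

end Green
end FF

namespace FF
open FTree

section Lists
variable {γ : Type*}

def Seg (A B : List γ) : Prop := ∃ p q, B = p ++ A ++ q

theorem Seg.refl (A : List γ) : Seg A A := ⟨[], [], by simp⟩

theorem Seg.trans {A B C : List γ} (h1 : Seg A B) (h2 : Seg B C) : Seg A C := by
  obtain ⟨p, q, rfl⟩ := h1; obtain ⟨r, s, rfl⟩ := h2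
  exact ⟨r ++ p, q ++ s, by simp⟩

theorem seg_intro (p : List γ) (A : List γ) (q : List γ) : Seg A (p ++ A ++ q) := ⟨p, q, rfl⟩

theorem seg_join_of_mem {C : List γ} {L : List (List γ)} (h : C ∈ L) : Seg C L.flatten := by
  obtain ⟨p, q, rfl⟩ := List.append_of_mem h
  exact ⟨p.flatten, q.flatten, by simp⟩

theorem concat_last_eq {p q : List γ} {a b : γ} (h : p ++ [a] = q ++ [b]) : a = b := by
  have := congrArg List.getLast? h
  simpa using this

theorem exists_split_first (Q : γ → Prop) (l : List γ) :
    (∀ x ∈ l, ¬ Q x) ∨ ∃ A x B, l = A ++ x :: B ∧ Q x ∧ ∀ y ∈ A, ¬ Q y := by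
  induction l with
  | nil => exact Or.inl (by simp)
  | cons a l ih =>
    by_cases ha : Q a
    · exact Or.inr ⟨[], a, l, by simp, ha, by simp⟩
    · rcases ih with h | ⟨A, x, B, rfl, hx, hA⟩
      · exact Or.inl (by simpa [ha] using h)
      · exact Or.inr ⟨a :: A, x, B, by simp, hx, by simpa [ha] using hA⟩

/-- chunk decomposition with `Q`-elements as chunk ends, possibly a `Q`-free tail -/
theorem exists_chunks_end (Q : γ → Prop) :
    ∀ (N : ℕ) (l : List γ), l.length ≤ N →
    ∃ (chunks : List (List γ)) (tail : List γ), l = chunks.flatten ++ tail ∧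
      (∀ C ∈ chunks, ∃ A x, C = A ++ [x] ∧ Q x ∧ ∀ y ∈ A, ¬ Q y) ∧
      (∀ y ∈ tail, ¬ Q y) := by
  intro N
  induction N with
  | zero =>
    intro l hl
    have : l = [] := List.length_eq_zero_iff.mp (by omega)
    exact ⟨[], [], by simp [this], by simp, by simp⟩
  | succ N ih =>
    intro l hl
    rcases exists_split_first Q l with h | ⟨A, x, B, rfl, hx, hA⟩
    · exact ⟨[], l, by simp, by simp, h⟩
    · have hB : B.length ≤ N := by
        have := congrArg List.length (rfl : A ++ x :: B = A ++ x :: B)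
        simp only [List.length_append, List.length_cons] at hl ⊢
        omega
      obtain ⟨chunks, tail, hdec, hch, ht⟩ := ih B hB
      exact ⟨(A ++ [x]) :: chunks, tail, by simp [hdec, List.append_assoc],
        by
          intro C hC
          rcases List.mem_cons.mp hC with rfl | hC
          · exact ⟨A, x, rfl, hx, hA⟩
          · exact hch C hC, ht⟩

/-- chunk decomposition with `Q`-elements as chunk heads, possibly a `Q`-free prefix -/
theorem exists_chunks_head (Q : γ → Prop) :
    ∀ (N : ℕ) (l : List γ), l.length ≤ N →
    ∃ (pre : List γ) (chunks : List (List γ)), l = pre ++ chunks.flatten ∧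
      (∀ y ∈ pre, ¬ Q y) ∧
      (∀ C ∈ chunks, ∃ x A, C = x :: A ∧ Q x ∧ ∀ y ∈ A, ¬ Q y) := by
  intro N
  induction N with
  | zero =>
    intro l hl
    have : l = [] := List.length_eq_zero_iff.mp (by omega)
    exact ⟨[], [], by simp [this], by simp, by simp⟩
  | succ N ih =>
    intro l hl
    rcases exists_split_first Q l with h | ⟨A, x, B, rfl, hx, hA⟩
    · exact ⟨l, [], by simp, h, by simp⟩
    · have hB : B.length ≤ N := by
        simp only [List.length_append, List.length_cons] at hl
        omega
      obtain ⟨pre, chunks, hdec, hpre, hch⟩ := ih B hB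
      refine ⟨A, (x :: pre) :: chunks, by simp [hdec], hA, ?_⟩
      intro C hC
      rcases List.mem_cons.mp hC with rfl | hC
      · exact ⟨x, pre, rfl, hx, hpre⟩
      · exact hch C hC

theorem exists_min_prefix (Qp : List γ → Prop) (l pre₀ post₀ : List γ)
    (hdec : l = pre₀ ++ post₀) (h0 : Qp pre₀) :
    ∃ pre post, l = pre ++ post ∧ Qp pre ∧ pre.length ≤ pre₀.length ∧
      ∀ pre' post', l = pre' ++ post' → pre'.length < pre.length → ¬ Qp pre' := by
  classical
  have hw : Qp (l.take pre₀.length) := by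
    rw [hdec, List.take_left]; exact h0
  let Qn : ℕ → Prop := fun j => Qp (l.take j)
  have hex : ∃ j, Qn j := ⟨pre₀.length, hw⟩
  let j := Nat.find hex
  refine ⟨l.take j, l.drop j, (List.take_append_drop j l).symm, Nat.find_spec hex, ?_, ?_⟩
  · have hj : j ≤ pre₀.length := Nat.find_min' hex hw
    calc (l.take j).length ≤ j := List.length_take_le j l
      _ ≤ pre₀.length := hj
  · intro pre' post' hdec' hlen hQ
    have hpre' : pre' = l.take pre'.length := by rw [hdec', List.take_left]
    have : Qn pre'.length := by show Qp (l.take pre'.length); rw [← hpre']; exact hQ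
    have hjle : j ≤ pre'.length := Nat.find_min' hex this
    have : (l.take j).length ≤ j := List.length_take_le j l
    omega

end Lists
end FF

namespace FF
open FTree

section Lists2
variable {γ : Type*}

def NoQ (Qp : List γ → Prop) (L : List γ) : Prop :=
  ∀ B, Seg B L → B ≠ [] → ¬ Qp B

theorem exists_main_chunks (Qp : List γ → Prop)
    (hmono : ∀ A B : List γ, Qp B → Qp (A ++ B)) (hnil : ¬ Qp []) :
    ∀ (N : ℕ) (l : List γ), l.length ≤ N →
    ∃ (chunks : List (List γ)) (tail : List γ), l = chunks.flatten ++ tail ∧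
      (∀ C ∈ chunks, (∃ A x, C = A ++ [x] ∧ NoQ Qp A) ∧ Qp C) ∧
      NoQ Qp tail := by
  intro N
  induction N with
  | zero =>
    intro l hl
    have : l = [] := List.length_eq_zero_iff.mp (by omega)
    subst this
    refine ⟨[], [], by simp, by simp, ?_⟩
    intro B hB hBne
    obtain ⟨p, q, hpq⟩ := hB
    exact absurd hpq.symm (by simp [hBne])
  | succ N ih =>
    intro l hl
    by_cases hex : ∃ pre post : List γ, l = pre ++ post ∧ pre ≠ [] ∧ Qp pre
    · obtain ⟨pre₀, post₀, hdec0, hne0, hQ0⟩ := hex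
      obtain ⟨pre, post, hdec, hQ, hlen0, hmin⟩ := exists_min_prefix Qp l pre₀ post₀ hdec0 hQ0
      have hprene : pre ≠ [] := by
        rintro rfl
        exact hnil hQ
      obtain ⟨A, x, hcat⟩ := (List.eq_nil_or_concat pre).resolve_left hprene
      rw [List.concat_eq_append] at hcat
      subst hcat
      have hpostlen : post.length ≤ N := by
        have := congrArg List.length hdec
        simp at this hl
        omega
      obtain ⟨chunks, tail, hdec2, hch, ht⟩ := ih post hpostlen
      refine ⟨(A ++ [x]) :: chunks, tail, by simp [hdec, hdec2, List.append_assoc], ?_, ht⟩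
      intro C hC
      rcases List.mem_cons.mp hC with rfl | hC
      · refine ⟨⟨A, x, rfl, ?_⟩, hQ⟩
        intro B hB hBne hQB
        obtain ⟨p, q, hpq⟩ := hB
        have hQpB : Qp (p ++ B) := hmono p B hQB
        have hpref : l = (p ++ B) ++ (q ++ [x] ++ post) := by
          rw [hdec, hpq]; simp [List.append_assoc]
        refine hmin (p ++ B) (q ++ [x] ++ post) hpref ?_ hQpB
        have := congrArg List.length hpq
        simp at this ⊢
        have hBpos : 0 < B.length := List.length_pos_iff.mpr hBne
        omega
      · exact hch C hC
    · refine ⟨[], l, by simp, by simp, ?_⟩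
      intro B hB hBne hQB
      obtain ⟨p, q, hpq⟩ := hB
      exact hex ⟨p ++ B, q, by simp [hpq], by simp [hBne], hmono p B hQB⟩

end Lists2

section Conds
variable {α S : Type*} [Semigroup S]

def Pcond (h : α → S) (X : Finset S) (Ts : List (FTree α S)) : Prop :=
  ∀ A, Seg A Ts → A ≠ [] → ∃ x ∈ X, WithOne.coe x = P h A

theorem Pcond.restrict {h : α → S} {X : Finset S} {Ts B : List (FTree α S)}
    (hseg : Seg B Ts) (hc : Pcond h X Ts) : Pcond h X B :=
  fun A hA hne => hc A (hA.trans hseg) hne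

def Jcond (h : α → S) (Ts : List (FTree α S)) : Prop :=
  ∀ A, Seg A Ts → A ≠ [] → Jrel (P h A) (P h Ts)

theorem Jcond.restrict {h : α → S} {Ts B : List (FTree α S)}
    (hseg : Seg B Ts) (hne : B ≠ []) (hc : Jcond h Ts) : Jcond h B :=
  fun A hA hAne => ((hc A (hA.trans hseg) hAne).trans (hc B hseg hne).symm)

def RZcond (h : α → S) (Ts : List (FTree α S)) : Prop :=
  ∀ (A : List (FTree α S)) (T : FTree α S), Seg (A ++ [T]) Ts →
    P h (A ++ [T]) = WithOne.coe (lbl h T)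

theorem RZcond.restrict {h : α → S} {Ts B : List (FTree α S)}
    (hseg : Seg B Ts) (hc : RZcond h Ts) : RZcond h B :=
  fun A T hA => hc A T (hA.trans hseg)

/-- The universal node constructor. -/
theorem mkBig (h : α → S) (W : FTree α S) (Ws : List (FTree α S))
    (hlen : 1 ≤ Ws.length)
    (hval : ∀ T ∈ W :: Ws, Valid h T)
    (hnode : ∀ T ∈ W :: Ws, IsNode T)
    (heq : 3 ≤ (W :: Ws).length → ∀ T₁ ∈ W :: Ws, ∀ T₂ ∈ W :: Ws, lbl h T₁ = lbl h T₂) :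
    ∃ Z, Valid h Z ∧ IsNode Z ∧
      (∀ d, (∀ T ∈ W :: Ws, depth T ≤ d) → depth Z ≤ 1 + d) ∧
      yield Z = ((W :: Ws).map yield).flatten ∧
      WithOne.coe (lbl h Z) = P h (W :: Ws) := by
  set s : S := (Ws.map (lbl h)).foldl (· * ·) (lbl h W) with hs
  refine ⟨FTree.node s (W :: Ws), ?_, isNode_node _ _, ?_, yield_node _ _, ?_⟩
  · refine Valid.internal s (W :: Ws) (by simp; omega) hval
      (fun t ht a => ne_leaf_of_isNode (hnode t ht) a) ?_ heq
    intro t rest hrest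
    injection hrest with h1 h2
    subst h1; subst h2
    rfl
  · intro d hd
    exact depth_node_le hd
  · show WithOne.coe s = P h (W :: Ws)
    rw [hs, coe_foldl, P_cons]
    congr 1
    simp [P, List.map_map, Function.comp_def]

end Conds
end FF

namespace FF
open FTree

section Helpers
variable {γ δ : Type*}

theorem seg_subset {A B : List γ} (h : Seg A B) : ∀ x ∈ A, x ∈ B := by
  obtain ⟨p, q, rfl⟩ := h
  intro x hx; simp [hx]

theorem forall₂_exists {R : γ → δ → Prop} :
    ∀ {L : List γ}, (∀ C ∈ L, ∃ W, R C W) → ∃ Ws, List.Forall₂ R L Ws := by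
  intro L
  induction L with
  | nil => exact fun _ => ⟨[], List.Forall₂.nil⟩
  | cons C L ih =>
    intro hL
    obtain ⟨W, hW⟩ := hL C (by simp)
    obtain ⟨Ws, hWs⟩ := ih (fun C hC => hL C (by simp [hC]))
    exact ⟨W :: Ws, List.Forall₂.cons hW hWs⟩

theorem forall₂_mem_right {R : γ → δ → Prop} :
    ∀ {L : List γ} {Ws : List δ}, List.Forall₂ R L Ws → ∀ W ∈ Ws, ∃ C ∈ L, R C W := by
  intro L Ws hF
  induction hF with
  | nil => simp
  | cons h _ ih =>
    intro W hW
    rcases List.mem_cons.mp hW with rfl | hW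
    · exact ⟨_, by simp, h⟩
    · obtain ⟨C, hC, hR⟩ := ih W hW
      exact ⟨C, by simp [hC], hR⟩

theorem forall₂_append_decomp {R : γ → δ → Prop} :
    ∀ {L : List γ} {p B : List δ}, List.Forall₂ R L (p ++ B) →
      ∃ lp lB, L = lp ++ lB ∧ List.Forall₂ R lp p ∧ List.Forall₂ R lB B := by
  intro L p
  induction p generalizing L with
  | nil =>
    intro B h
    exact ⟨[], L, by simp, List.Forall₂.nil, h⟩
  | cons x p ih =>
    intro B h
    rw [List.cons_append, List.forall₂_cons_right_iff] at h
    obtain ⟨C, L', hR, hF, rfl⟩ := h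
    obtain ⟨lp, lB, rfl, h1, h2⟩ := ih hF
    exact ⟨C :: lp, lB, by simp, List.Forall₂.cons hR h1, h2⟩

end Helpers

section TreeHelpers
variable {α S : Type*} [Semigroup S]

theorem P_join (h : α → S) (L : List (List (FTree α S))) :
    P h L.flatten = (L.map (P h)).prod := by
  induction L with
  | nil => simp [P_nil]
  | cons C L ih => simp [P_append, ih]

theorem yield_join_map (f : FTree α S → List α) (L : List (List (FTree α S))) :
    ((L.flatten).map f).flatten = (L.map (fun C => ((C.map f).flatten))).flatten := by
  induction L with
  | nil => simp
  | cons C L ih =>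
    simp only [List.flatten_cons, List.map_cons, List.map_append, List.flatten_append, ih]

/-- The result package relation used when combining a chunk into one tree. -/
def ChunkRel (h : α → S) (D : ℕ) (C : List (FTree α S)) (W : FTree α S) : Prop :=
  Valid h W ∧ IsNode W ∧ depth W ≤ D ∧ yield W = (C.map yield).flatten ∧
    WithOne.coe (lbl h W) = P h C

theorem forall₂_yield {h : α → S} {D : ℕ} {L : List (List (FTree α S))} {Ws : List (FTree α S)}
    (hF : List.Forall₂ (ChunkRel h D) L Ws) :
    (Ws.map yield).flatten = ((L.flatten).map yield).flatten := by
  rw [yield_join_map]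
  induction hF with
  | nil => simp
  | cons hR hF ih => simp [hR.2.2.2.1, ih]

theorem forall₂_P {h : α → S} {D : ℕ} {L : List (List (FTree α S))} {Ws : List (FTree α S)}
    (hF : List.Forall₂ (ChunkRel h D) L Ws) :
    P h Ws = P h L.flatten := by
  induction hF with
  | nil => simp [P_nil]
  | cons hR hF ih =>
    rw [P_cons, hR.2.2.2.2, ih]
    exact (P_append _ _ _).symm

/-- Combine a `Forall₂`-family of chunk trees into a single tree, given all chunk
trees have the same label `v`. -/
theorem combine_same_label {h : α → S} {D : ℕ} {L : List (List (FTree α S))}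
    {Ws : List (FTree α S)} (hF : List.Forall₂ (ChunkRel h D) L Ws) (hne : Ws ≠ [])
    {v : S} (hv : ∀ W ∈ Ws, lbl h W = v) :
    ∃ Z, Valid h Z ∧ IsNode Z ∧ depth Z ≤ 1 + D ∧
      yield Z = ((L.flatten).map yield).flatten ∧ WithOne.coe (lbl h Z) = P h L.flatten := by
  obtain ⟨W0, Ws', rfl⟩ : ∃ W0 Ws', Ws = W0 :: Ws' := by
    cases Ws with
    | nil => exact absurd rfl hne
    | cons a b => exact ⟨a, b, rfl⟩
  have hmem : ∀ W ∈ W0 :: Ws', Valid h W ∧ IsNode W ∧ depth W ≤ D := by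
    intro W hW
    obtain ⟨C, _, hR⟩ := forall₂_mem_right hF W hW
    exact ⟨hR.1, hR.2.1, hR.2.2.1⟩
  cases Ws' with
  | nil =>
    obtain ⟨C, hC, hR⟩ := forall₂_mem_right hF W0 (by simp)
    refine ⟨W0, hR.1, hR.2.1, le_trans hR.2.2.1 (by omega), ?_, ?_⟩
    · have h1 := forall₂_yield hF
      simpa using h1
    · have h2 := forall₂_P hF
      rw [P_cons, P_nil, mul_one] at h2
      exact h2
  | cons W1 Ws'' =>
    obtain ⟨Z, hZv, hZn, hZd, hZy, hZl⟩ := mkBig h W0 (W1 :: Ws'') (by simp)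
      (fun T hT => (hmem T hT).1) (fun T hT => (hmem T hT).2.1)
      (by
        intro _ T1 h1 T2 h2
        rw [hv T1 h1, hv T2 h2])
    refine ⟨Z, hZv, hZn, ?_, ?_, ?_⟩
    · exact hZd D (fun T hT => (hmem T hT).2.2)
    · rw [hZy, forall₂_yield hF]
    · rw [hZl, forall₂_P hF]

end TreeHelpers

section RZ
variable {α S : Type*} [Semigroup S]

/-- The right-zero combination lemma. -/
theorem RZ (V : Finset S) : ∃ k : ℕ, ∀ (h : α → S) (d : ℕ) (Ts : List (FTree α S)),
    Ts ≠ [] → (∀ T ∈ Ts, Valid h T ∧ IsNode T ∧ depth T ≤ d) →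
    (∀ T ∈ Ts, lbl h T ∈ V) → RZcond h Ts →
    ∃ Z, Valid h Z ∧ IsNode Z ∧ depth Z ≤ k + d ∧
      yield Z = (Ts.map yield).flatten ∧ WithOne.coe (lbl h Z) = P h Ts := by
  classical
  induction V using Finset.strongInductionOn with
  | _ V ih =>
  set kk : ℕ := V.sup (fun v =>
    if hv : v ∈ V then (ih (V.erase v) (Finset.erase_ssubset hv)).choose else 0) with hkk
  refine ⟨kk + 2, ?_⟩
  intro h d Ts hne hgood hlab hrz
  obtain ⟨Ts', Tl, hcat⟩ := (List.eq_nil_or_concat Ts).resolve_left hne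
  rw [List.concat_eq_append] at hcat
  set v : S := lbl h Tl with hv
  obtain ⟨chunks, tail, hdec, hch, htail⟩ :=
    exists_chunks_end (fun T => lbl h T = v) Ts.length Ts le_rfl
  -- tail is empty
  have htail0 : tail = [] := by
    rcases List.eq_nil_or_concat tail with h0 | ⟨tail', y, hty⟩
    · exact h0
    · rw [List.concat_eq_append] at hty
      exfalso
      have h1 : (chunks.flatten ++ tail') ++ [y] = Ts' ++ [Tl] := by
        rw [← hcat, hdec, hty]; simp
      have h2 : y = Tl := concat_last_eq h1
      exact htail y (by simp [hty]) (by rw [h2])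
  subst htail0
  rw [List.append_nil] at hdec
  have hchne : chunks ≠ [] := by
    rintro rfl
    rw [hdec] at hne; simp at hne
  -- each chunk has a combined tree
  have hWC : ∀ C ∈ chunks, ∃ W, ChunkRel h (1 + (kk + d)) C W := by
    intro C hC
    obtain ⟨A, x, rfl, hxv, hAfree⟩ := hch C hC
    have hsegC : Seg (A ++ [x]) Ts := by rw [hdec]; exact seg_join_of_mem hC
    by_cases hA : A = []
    · subst hA
      obtain ⟨hvx, hnx, hdx⟩ := hgood x (seg_subset hsegC x (by simp))
      exact ⟨x, hvx, hnx, by omega, by simp, by simp [P_cons, P_nil]⟩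
    · have hsegA : Seg A Ts := Seg.trans ⟨[], [x], by simp⟩ hsegC
      have hvV : v ∈ V := hlab Tl (by rw [hcat]; simp)
      have hklocal := (ih (V.erase v) (Finset.erase_ssubset hvV)).choose_spec h d A hA
        (fun T hT => hgood T (seg_subset hsegA T hT))
        (by
          intro T hT
          exact Finset.mem_erase.mpr ⟨hAfree T hT, hlab T (seg_subset hsegA T hT)⟩)
        (hrz.restrict hsegA)
      obtain ⟨U, hUv, hUn, hUd, hUy, hUl⟩ := hklocal
      have hkle : (ih (V.erase v) (Finset.erase_ssubset hvV)).choose ≤ kk := by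
        rw [hkk]
        have := Finset.le_sup (f := fun v =>
          if hv : v ∈ V then (ih (V.erase v) (Finset.erase_ssubset hv)).choose else 0) hvV
        simpa [hvV] using this
      obtain ⟨hvx, hnx, hdx⟩ := hgood x (seg_subset hsegC x (by simp))
      obtain ⟨Z, hZv, hZn, hZd, hZy, hZl⟩ := mkBig h U [x] (by simp)
        (by rintro T hT; rcases List.mem_cons.mp hT with rfl | hT
            · exact hUv
            · simp at hT; subst hT; exact hvx)
        (by rintro T hT; rcases List.mem_cons.mp hT with rfl | hT
            · exact hUn
            · simp at hT; subst hT; exact hnx)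
        (by intro h3; simp at h3)
      refine ⟨Z, hZv, hZn, ?_, ?_, ?_⟩
      · refine le_trans (hZd (kk + d) ?_) (by omega)
        rintro T hT
        rcases List.mem_cons.mp hT with rfl | hT
        · exact le_trans hUd (by omega)
        · simp at hT; subst hT; exact le_trans hdx (by omega)
      · rw [hZy]; simp [hUy]
      · rw [hZl, P_cons, hUl, P_append]
  obtain ⟨Ws, hF⟩ := forall₂_exists hWC
  have hWsne : Ws ≠ [] := by
    rintro rfl
    cases hF
    exact hchne rfl
  have hlabv : ∀ W ∈ Ws, lbl h W = v := by
    intro W hW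
    obtain ⟨C, hC, hR⟩ := forall₂_mem_right hF W hW
    obtain ⟨A, x, rfl, hxv, -⟩ := hch C hC
    have hsegC : Seg (A ++ [x]) Ts := by rw [hdec]; exact seg_join_of_mem hC
    have := hrz A x hsegC
    rw [← WithOne.coe_inj]
    rw [hR.2.2.2.2, this, hxv]
  obtain ⟨Z, hZv, hZn, hZd, hZy, hZl⟩ := combine_same_label hF hWsne hlabv
  refine ⟨Z, hZv, hZn, by omega, by rw [hZy, ← hdec], by rw [hZl, ← hdec]⟩

end RZ
end FF

namespace FF
open FTree

section CL
variable {α S : Type*} [Semigroup S]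

theorem forall₂_append {γ δ : Type*} {R : γ → δ → Prop} :
    ∀ {a : List γ} {b : List δ} {c : List γ} {e : List δ},
      List.Forall₂ R a b → List.Forall₂ R c e → List.Forall₂ R (a ++ c) (b ++ e) := by
  intro a b c e h1 h2
  induction h1 with
  | nil => exact h2
  | cons hR hF ih => exact List.Forall₂.cons hR ih

theorem seg_join_mono {γ : Type*} {A B : List (List γ)} (h : Seg A B) :
    Seg A.flatten B.flatten := by
  obtain ⟨p, q, rfl⟩ := h
  exact ⟨p.flatten, q.flatten, by simp⟩

theorem join_ne_nil {γ : Type*} {L : List (List γ)} {C : List γ} (hC : C ∈ L) (hne : C ≠ []) :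
    L.flatten ≠ [] := by
  obtain ⟨p, q, rfl⟩ := List.append_of_mem hC
  intro h0
  simp only [List.flatten_append, List.flatten_cons, List.append_eq_nil_iff] at h0
  exact hne h0.2.1

/-- The core combination lemma: all segments `J`-equivalent to the whole. -/
theorem CL (n : ℕ) (hn1 : 1 ≤ n) (hn : ∀ x : WithOne S, x ^ n = x ^ (n+1))
    (kRZ : ℕ)
    (hRZ : ∀ (h : α → S) (d : ℕ) (Ts : List (FTree α S)),
      Ts ≠ [] → (∀ T ∈ Ts, Valid h T ∧ IsNode T ∧ depth T ≤ d) →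
      RZcond h Ts →
      ∃ Z, Valid h Z ∧ IsNode Z ∧ depth Z ≤ kRZ + d ∧
        yield Z = (Ts.map yield).flatten ∧ WithOne.coe (lbl h Z) = P h Ts)
    (V : Finset S) :
    ∃ k : ℕ, ∀ (h : α → S) (d : ℕ) (Ts : List (FTree α S)),
    Ts ≠ [] → (∀ T ∈ Ts, Valid h T ∧ IsNode T ∧ depth T ≤ d) →
    (∀ T ∈ Ts, lbl h T ∈ V) → Jcond h Ts →
    ∃ Z, Valid h Z ∧ IsNode Z ∧ depth Z ≤ k + d ∧
      yield Z = (Ts.map yield).flatten ∧ WithOne.coe (lbl h Z) = P h Ts := by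
  classical
  induction V using Finset.strongInductionOn with
  | _ V ih =>
  set kk : ℕ := V.sup (fun v =>
    if hv : v ∈ V then (ih (V.erase v) (Finset.erase_ssubset hv)).choose else 0) with hkk
  refine ⟨kRZ + kk + 2, ?_⟩
  intro h d Ts hne hgood hlab hj
  obtain ⟨T₁, rest, rfl⟩ : ∃ T₁ rest, Ts = T₁ :: rest := by
    cases Ts with
    | nil => exact absurd rfl hne
    | cons a b => exact ⟨a, b, rfl⟩
  set β : S := lbl h T₁ with hβ
  set Q : FTree α S → Prop :=
    fun T => Rrel (WithOne.coe (lbl h T)) (WithOne.coe β) with hQ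
  obtain ⟨pre, chunks, hdec, hpre, hch⟩ :=
    exists_chunks_head Q (T₁ :: rest).length (T₁ :: rest) le_rfl
  have hpre0 : pre = [] := by
    cases pre with
    | nil => rfl
    | cons p pre' =>
      exfalso
      have hTp : T₁ = p := by
        have h2 := hdec
        simp only [List.cons_append] at h2
        injection h2 with h3 h4
      refine hpre p (by simp) ?_
      show Rrel (WithOne.coe (lbl h p)) (WithOne.coe β)
      rw [hβ, ← hTp]
      exact ⟨Rle.refl _, Rle.refl _⟩
  subst hpre0
  rw [List.nil_append] at hdec
  have hchne : chunks ≠ [] := by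
    rintro rfl
    simp at hdec
  -- basic facts about chunks
  have hchfact : ∀ C ∈ chunks, ∃ x A, C = x :: A ∧ Q x ∧
      Seg C (T₁ :: rest) ∧ Rle (P h C) (WithOne.coe (lbl h x)) := by
    intro C hC
    obtain ⟨x, A, rfl, hx, hAfree⟩ := hch C hC
    refine ⟨x, A, rfl, hx, by rw [hdec]; exact seg_join_of_mem hC, ?_⟩
    rw [P_cons]
    exact ⟨P h A, rfl⟩
  -- Jrel of any nonempty segment with the total
  have hjseg : ∀ B : List (FTree α S), Seg B (T₁ :: rest) → B ≠ [] →
      Jrel (P h B) (P h (T₁ :: rest)) := hj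
  -- trees for the chunks
  have hWC : ∀ C ∈ chunks, ∃ W, ChunkRel h (1 + (kk + d)) C W := by
    intro C hC
    obtain ⟨x, A, rfl, hx, hAfree⟩ := hch C hC
    have hsegC : Seg (x :: A) (T₁ :: rest) := by rw [hdec]; exact seg_join_of_mem hC
    obtain ⟨hvx, hnx, hdx⟩ := hgood x (seg_subset hsegC x (by simp))
    by_cases hA : A = []
    · subst hA
      exact ⟨x, hvx, hnx, by omega, by simp, by simp [P_cons, P_nil]⟩
    · have hsegA : Seg A (T₁ :: rest) := Seg.trans ⟨[x], [], by simp⟩ hsegC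
      have hβV : β ∈ V := hlab T₁ (by simp)
      obtain ⟨U, hUv, hUn, hUd, hUy, hUl⟩ :=
        (ih (V.erase β) (Finset.erase_ssubset hβV)).choose_spec h d A hA
        (fun T hT => hgood T (seg_subset hsegA T hT))
        (by
          intro T hT
          refine Finset.mem_erase.mpr ⟨?_, hlab T (seg_subset hsegA T hT)⟩
          intro heq
          refine hAfree T hT ?_
          show Rrel (WithOne.coe (lbl h T)) (WithOne.coe β)
          rw [heq]
          exact ⟨Rle.refl _, Rle.refl _⟩)
        (hj.restrict hsegA hA)
      have hkle : (ih (V.erase β) (Finset.erase_ssubset hβV)).choose ≤ kk := by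
        rw [hkk]
        have := Finset.le_sup (f := fun v =>
          if hv : v ∈ V then (ih (V.erase v) (Finset.erase_ssubset hv)).choose else 0) hβV
        simpa [hβV] using this
      obtain ⟨Z, hZv, hZn, hZd, hZy, hZl⟩ := mkBig h x [U] (by simp)
        (by rintro T hT; rcases List.mem_cons.mp hT with rfl | hT
            · exact hvx
            · simp at hT; subst hT; exact hUv)
        (by rintro T hT; rcases List.mem_cons.mp hT with rfl | hT
            · exact hnx
            · simp at hT; subst hT; exact hUn)
        (by intro h3; simp at h3)
      refine ⟨Z, hZv, hZn, ?_, ?_, ?_⟩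
      · refine le_trans (hZd (kk + d) ?_) (by omega)
        rintro T hT
        rcases List.mem_cons.mp hT with rfl | hT
        · exact le_trans hdx (by omega)
        · simp at hT; subst hT; exact le_trans hUd (by omega)
      · rw [hZy]; simp [hUy]
      · rw [hZl, P_cons, P_singleton, hUl, P_cons]
  obtain ⟨Ws, hF⟩ := forall₂_exists hWC
  have hWsne : Ws ≠ [] := by
    rintro rfl
    cases hF
    exact hchne rfl
  -- the right-zero property for the chunk trees
  have hrzW : RZcond h Ws := by
    intro B W' hseg
    obtain ⟨p, q, hWdec⟩ := hseg
    have hF' := hF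
    rw [hWdec] at hF'
    obtain ⟨l1, lq, he1, hF1, hFq⟩ := forall₂_append_decomp hF'
    obtain ⟨lp, lm, he2, hFp, hFm⟩ := forall₂_append_decomp hF1
    obtain ⟨lB, lx, he3, hFB, hFx⟩ := forall₂_append_decomp hFm
    obtain ⟨C', lx0, hRW, hF0, he4⟩ := List.forall₂_cons_right_iff.mp hFx
    rw [List.forall₂_nil_right_iff] at hF0
    subst he4
    subst hF0
    subst he3
    have hsegchunks : Seg (lB ++ [C']) chunks := ⟨lp, lq, by rw [he1, he2]⟩
    have hmemchunks : ∀ C ∈ lB ++ [C'], C ∈ chunks :=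
      seg_subset hsegchunks
    have hCne : ∀ C ∈ lB ++ [C'], C ≠ [] := by
      intro C hC
      obtain ⟨x, A, rfl, -, -, -⟩ := hchfact C (hmemchunks C hC)
      simp
    have hsegm : Seg ((lB ++ [C']).flatten) (T₁ :: rest) := by
      rw [hdec]
      exact seg_join_mono hsegchunks
    have hmne : (lB ++ [C']).flatten ≠ [] :=
      join_ne_nil (by simp) (hCne C' (by simp))
    have hJm : Jrel (P h ((lB ++ [C']).flatten)) (P h (T₁ :: rest)) := hjseg _ hsegm hmne
    have hRchunk : ∀ C ∈ chunks, Rrel (P h C) (WithOne.coe β) := by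
      intro C hC
      obtain ⟨x, A, rfl, hx, hsegC, hRle⟩ := hchfact C hC
      have hJC : Jrel (P h (x :: A)) (P h (T₁ :: rest)) := hjseg _ hsegC (by simp)
      have hJx : Jrel (P h [x]) (P h (T₁ :: rest)) :=
        hjseg [x] (Seg.trans ⟨[], A, by simp⟩ hsegC) (by simp)
      rw [P_singleton] at hJx
      have hJ2 : Jle (WithOne.coe (lbl h x)) (P h (x :: A)) := (hJx.trans hJC.symm).1
      have hR2 : Rle (WithOne.coe (lbl h x)) (P h (x :: A)) := aper_R hn1 hn hRle hJ2
      exact Rrel.trans ⟨hRle, hR2⟩ hx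
    have hRm : Rrel (P h ((lB ++ [C']).flatten)) (P h C') := by
      cases lB with
      | nil =>
        simp only [List.nil_append, List.flatten_cons, List.flatten_nil, List.append_nil]
        exact ⟨Rle.refl _, Rle.refl _⟩
      | cons Cf lB' =>
        have hRle1 : Rle (P h (((Cf :: lB') ++ [C']).flatten)) (P h Cf) := by
          refine ⟨P h ((lB' ++ [C']).flatten), ?_⟩
          rw [← P_append]
          congr 1
        have hmemCf : Cf ∈ (Cf :: lB') ++ [C'] := by simp
        have hJf : Jrel (P h Cf) (P h (T₁ :: rest)) :=
          hjseg Cf (Seg.trans (seg_join_of_mem hmemCf)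
            (by rw [hdec]; exact seg_join_mono hsegchunks)) (hCne Cf (by simp))
        have hR1 : Rrel (P h (((Cf :: lB') ++ [C']).flatten)) (P h Cf) :=
          ⟨hRle1, aper_R hn1 hn hRle1 (hJf.trans hJm.symm).1⟩
        refine hR1.trans (Rrel.trans (hRchunk Cf (hmemchunks Cf (by simp)))
          (Rrel.symm (hRchunk C' (hmemchunks C' (by simp)))))
    have hLm : Lle (P h ((lB ++ [C']).flatten)) (P h C') := by
      have hjj : (lB ++ [C']).flatten = lB.flatten ++ C' := by simp
      rw [hjj, P_append]
      exact ⟨P h lB.flatten, rfl⟩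
    have heq : P h C' = P h ((lB ++ [C']).flatten) := aper_eq hn1 hn hRm.2 hLm
    have hPm : P h (B ++ [W']) = P h ((lB ++ [C']).flatten) := by
      rw [forall₂_P (forall₂_append hFB hFx)]
    rw [hPm, ← heq, hRW.2.2.2.2]
  -- combine using RZ
  have hgoodW : ∀ W ∈ Ws, Valid h W ∧ IsNode W ∧ depth W ≤ 1 + (kk + d) := by
    intro W hW
    obtain ⟨C, hC, hR⟩ := forall₂_mem_right hF W hW
    exact ⟨hR.1, hR.2.1, hR.2.2.1⟩
  obtain ⟨Z, hZv, hZn, hZd, hZy, hZl⟩ := hRZ h (1 + (kk + d)) Ws hWsne hgoodW hrzW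
  refine ⟨Z, hZv, hZn, by omega, ?_, ?_⟩
  · rw [hZy, forall₂_yield hF, hdec]
  · rw [hZl, forall₂_P hF, hdec]

end CL
end FF

namespace FF
open FTree

section MAIN
variable {α S : Type*} [Semigroup S]

theorem exists_coe_mul_left (u : WithOne S) (s : S) :
    ∃ t : S, u * WithOne.coe s = WithOne.coe t := by
  induction u using WithOne.recOneCoe with
  | one => exact ⟨s, one_mul _⟩
  | coe a => exact ⟨a * s, (WithOne.coe_mul a s).symm⟩

theorem exists_coe_mul_right (v : WithOne S) (s : S) :
    ∃ t : S, WithOne.coe s * v = WithOne.coe t := by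
  induction v using WithOne.recOneCoe with
  | one => exact ⟨s, mul_one _⟩
  | coe a => exact ⟨s * a, (WithOne.coe_mul s a).symm⟩

theorem mul_coe_mul_ne_one (u v : WithOne S) (s : S) : u * WithOne.coe s * v ≠ 1 := by
  obtain ⟨t, ht⟩ := exists_coe_mul_left u s
  rw [ht]
  obtain ⟨t', ht'⟩ := exists_coe_mul_right v t
  rw [ht']
  exact WithOne.coe_ne_one

theorem jle_of_seg {h : α → S} {A B : List (FTree α S)} (hseg : Seg A B) :
    Jle (P h B) (P h A) := by
  obtain ⟨p, q, rfl⟩ := hseg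
  exact ⟨P h p, P h q, by rw [P_append, P_append]⟩

theorem MAIN (n : ℕ) (hn1 : 1 ≤ n) (hn : ∀ x : WithOne S, x ^ n = x ^ (n+1))
    (kCL : ℕ)
    (hCL : ∀ (h : α → S) (d : ℕ) (Ts : List (FTree α S)),
      Ts ≠ [] → (∀ T ∈ Ts, Valid h T ∧ IsNode T ∧ depth T ≤ d) →
      Jcond h Ts →
      ∃ Z, Valid h Z ∧ IsNode Z ∧ depth Z ≤ kCL + d ∧
        yield Z = (Ts.map yield).flatten ∧ WithOne.coe (lbl h Z) = P h Ts)
    (X : Finset S) :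
    ∃ k : ℕ, ∀ (h : α → S) (d : ℕ) (Ts : List (FTree α S)),
    Ts ≠ [] → (∀ T ∈ Ts, Valid h T ∧ IsNode T ∧ depth T ≤ d) →
    Pcond h X Ts →
    ∃ Z, Valid h Z ∧ IsNode Z ∧ depth Z ≤ k + d ∧
      yield Z = (Ts.map yield).flatten ∧ WithOne.coe (lbl h Z) = P h Ts := by
  classical
  induction X using Finset.strongInductionOn with
  | _ X ih =>
  have hssub : ∀ s ∈ X,
      X.filter (fun y => ¬ Jle (WithOne.coe y) (WithOne.coe (α := S) s)) ⊂ X := by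
    intro s hs
    rw [Finset.filter_ssubset]
    exact ⟨s, hs, not_not_intro (Jle.refl _)⟩
  set kk : ℕ := X.sup (fun s =>
    if hs : s ∈ X then
      (ih (X.filter (fun y => ¬ Jle (WithOne.coe y) (WithOne.coe s))) (hssub s hs)).choose
    else 0) with hkk
  refine ⟨kCL + kk + 2, ?_⟩
  intro h d Ts hne hgood hpc
  obtain ⟨s, hsX, hstot⟩ := hpc Ts (Seg.refl Ts) hne
  set X' : Finset S := X.filter (fun y => ¬ Jle (WithOne.coe y) (WithOne.coe s)) with hX'
  have hkle : (ih X' (hssub s hsX)).choose ≤ kk := by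
    rw [hkk]
    have := Finset.le_sup (f := fun s =>
      if hs : s ∈ X then
        (ih (X.filter (fun y => ¬ Jle (WithOne.coe y) (WithOne.coe s))) (hssub s hs)).choose
      else 0) hsX
    simpa [hsX] using this
  -- the greedy decomposition wrt `Qp`
  set Qp : List (FTree α S) → Prop := fun C => Jle (P h C) (P h Ts) with hQp
  have hmono : ∀ A B : List (FTree α S), Qp B → Qp (A ++ B) := by
    intro A B hB
    show Jle (P h (A ++ B)) (P h Ts)
    rw [P_append]
    exact (Jle.mul_left _ _).trans hB
  have hnil : ¬ Qp [] := by
    show ¬ Jle (P h []) (P h Ts)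
    rintro ⟨u, v, huv⟩
    rw [P_nil, ← hstot] at huv
    exact mul_coe_mul_ne_one u v s huv.symm
  obtain ⟨chunks, tail, hdec, hch, htail⟩ :=
    exists_main_chunks Qp hmono hnil Ts.length Ts le_rfl
  have hchne : chunks ≠ [] := by
    rintro rfl
    simp only [List.flatten_nil, List.nil_append] at hdec
    exact htail Ts (by rw [hdec]; exact Seg.refl _) hne (Jle.refl _)
  have hsegjoin : Seg chunks.flatten Ts := ⟨[], tail, by rw [hdec]; simp⟩
  have hsegchunkTs : ∀ C ∈ chunks, Seg C Ts :=
    fun C hC => (seg_join_of_mem hC).trans hsegjoin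
  -- the `X'`-condition for `NoQ` parts
  have hX'cond : ∀ B : List (FTree α S), Seg B Ts → NoQ Qp B → Pcond h X' B := by
    intro B hsegB hNoQ A hsegA hAne
    obtain ⟨x', hx'X, hx'⟩ := hpc A (hsegA.trans hsegB) hAne
    refine ⟨x', Finset.mem_filter.mpr ⟨hx'X, ?_⟩, hx'⟩
    intro hj
    refine hNoQ A hsegA hAne ?_
    show Jle (P h A) (P h Ts)
    rw [← hx', ← hstot]
    exact hj
  -- build trees for the chunks
  have hWC : ∀ C ∈ chunks, ∃ W, ChunkRel h (1 + (kk + d)) C W := by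
    intro C hC
    obtain ⟨⟨A, x, rfl, hNoQA⟩, hQpC⟩ := hch C hC
    have hsegC : Seg (A ++ [x]) Ts := hsegchunkTs _ hC
    obtain ⟨hvx, hnx, hdx⟩ := hgood x (seg_subset hsegC x (by simp))
    by_cases hA : A = []
    · subst hA
      exact ⟨x, hvx, hnx, by omega, by simp, by simp [P_cons, P_nil]⟩
    · have hsegA : Seg A Ts := (Seg.trans ⟨[], [x], by simp⟩ hsegC)
      obtain ⟨U, hUv, hUn, hUd, hUy, hUl⟩ := (ih X' (hssub s hsX)).choose_spec h d A hA
        (fun T hT => hgood T (seg_subset hsegA T hT))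
        (hX'cond A hsegA hNoQA)
      obtain ⟨Z, hZv, hZn, hZd, hZy, hZl⟩ := mkBig h U [x] (by simp)
        (by rintro T hT; rcases List.mem_cons.mp hT with rfl | hT
            · exact hUv
            · simp at hT; subst hT; exact hvx)
        (by rintro T hT; rcases List.mem_cons.mp hT with rfl | hT
            · exact hUn
            · simp at hT; subst hT; exact hnx)
        (by intro h3; simp at h3)
      refine ⟨Z, hZv, hZn, ?_, ?_, ?_⟩
      · refine le_trans (hZd (kk + d) ?_) (by omega)
        rintro T hT
        rcases List.mem_cons.mp hT with rfl | hT
        · exact le_trans hUd (by omega)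
        · simp at hT; subst hT; exact le_trans hdx (by omega)
      · rw [hZy]; simp [hUy]
      · rw [hZl, P_cons, P_singleton, hUl, P_append, P_singleton]
  obtain ⟨Ws, hF⟩ := forall₂_exists hWC
  have hWsne : Ws ≠ [] := by
    rintro rfl
    cases hF
    exact hchne rfl
  -- the J-condition for the chunk trees
  have hjW : Jcond h Ws := by
    intro B hseg hBne
    obtain ⟨p, q, hWdec⟩ := hseg
    have hF' := hF
    rw [hWdec] at hF'
    obtain ⟨l1, lq, he1, hF1, hFq⟩ := forall₂_append_decomp hF'
    obtain ⟨lp, lm, he2, hFp, hFm⟩ := forall₂_append_decomp hF1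
    have hsegmc : Seg lm chunks := ⟨lp, lq, by rw [he1, he2]⟩
    have hPB : P h B = P h lm.flatten := forall₂_P hFm
    have hlmne : lm ≠ [] := by
      rintro rfl
      rw [List.forall₂_nil_left_iff] at hFm
      exact hBne hFm
    obtain ⟨C₀, lm', rfl⟩ : ∃ C₀ lm', lm = C₀ :: lm' := by
      cases lm with
      | nil => exact absurd rfl hlmne
      | cons a b => exact ⟨a, b, rfl⟩
    have hC₀ : C₀ ∈ chunks := seg_subset hsegmc C₀ (by simp)
    have hQpC₀ : Jle (P h C₀) (P h Ts) := (hch C₀ hC₀).2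
    -- Jle (P h B) (P h Ts)
    have h1 : Jle (P h B) (P h Ts) := by
      rw [hPB]
      have hj : P h ((C₀ :: lm').flatten) = P h C₀ * P h (lm'.flatten) := P_append h C₀ lm'.flatten
      rw [hj]
      exact (Jle.mul_right _ _).trans hQpC₀
    -- Jle (P h Ts) (P h B)
    have h2 : Jle (P h Ts) (P h B) := by
      rw [hPB]
      exact (jle_of_seg ((seg_join_mono hsegmc).trans hsegjoin))
    -- Jrel (P h Ws) (P h Ts)
    have h3 : Jle (P h Ws) (P h Ts) := by
      rw [forall₂_P hF]
      obtain ⟨C₁, ch', rfl⟩ : ∃ C₁ ch', chunks = C₁ :: ch' := by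
        cases chunks with
        | nil => exact absurd rfl hchne
        | cons a b => exact ⟨a, b, rfl⟩
      have hj : P h ((C₁ :: ch').flatten) = P h C₁ * P h (ch'.flatten) := P_append h C₁ ch'.flatten
      rw [hj]
      exact (Jle.mul_right _ _).trans (hch C₁ (by simp)).2
    have h4 : Jle (P h Ts) (P h Ws) := by
      rw [forall₂_P hF]
      exact jle_of_seg hsegjoin
    exact Jrel.trans ⟨h1, h2⟩ ⟨h4, h3⟩
  have hgoodW : ∀ W ∈ Ws, Valid h W ∧ IsNode W ∧ depth W ≤ 1 + (kk + d) := by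
    intro W hW
    obtain ⟨C, hC, hR⟩ := forall₂_mem_right hF W hW
    exact ⟨hR.1, hR.2.1, hR.2.2.1⟩
  obtain ⟨Z1, hZ1v, hZ1n, hZ1d, hZ1y, hZ1l⟩ := hCL h (1 + (kk + d)) Ws hWsne hgoodW hjW
  -- deal with the tail
  rcases List.eq_nil_or_concat tail with htail0 | ⟨tail', y, hty⟩
  · subst htail0
    rw [List.append_nil] at hdec
    refine ⟨Z1, hZ1v, hZ1n, by omega, ?_, ?_⟩
    · rw [hZ1y, forall₂_yield hF, hdec]
    · rw [hZ1l, forall₂_P hF, hdec]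
  · have htlne : tail ≠ [] := by rw [hty]; simp
    have hsegtail : Seg tail Ts := ⟨chunks.flatten, [], by rw [hdec]; simp⟩
    obtain ⟨Vt, hVv, hVn, hVd, hVy, hVl⟩ := (ih X' (hssub s hsX)).choose_spec h d tail htlne
      (fun T hT => hgood T (seg_subset hsegtail T hT))
      (hX'cond tail hsegtail htail)
    obtain ⟨Z, hZv, hZn, hZd, hZy, hZl⟩ := mkBig h Z1 [Vt] (by simp)
      (by rintro T hT; rcases List.mem_cons.mp hT with rfl | hT
          · exact hZ1v
          · simp at hT; subst hT; exact hVv)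
      (by rintro T hT; rcases List.mem_cons.mp hT with rfl | hT
          · exact hZ1n
          · simp at hT; subst hT; exact hVn)
      (by intro h3; simp at h3)
    refine ⟨Z, hZv, hZn, ?_, ?_, ?_⟩
    · refine le_trans (hZd (kCL + 1 + kk + d) ?_) (by omega)
      rintro T hT
      rcases List.mem_cons.mp hT with rfl | hT
      · exact le_trans hZ1d (by omega)
      · simp at hT; subst hT; exact le_trans hVd (by omega)
    · rw [hZy]
      simp only [List.map_cons, List.map_nil, List.flatten_cons, List.flatten_nil, List.append_nil]
      rw [hZ1y, hVy, forall₂_yield hF, hdec]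
      simp [yield_join_map]
    · rw [hZl, P_cons, P_singleton, hZ1l, hVl, forall₂_P hF, ← P_append, ← hdec]
end MAIN
end FF

namespace FF
open FTree

section Final
variable {α S : Type*} [Semigroup S]

theorem depth_leaf (a : α) : (FTree.leaf a : FTree α S).depth = 0 := by rw [FTree.depth]

theorem yield_leaf (a : α) : (FTree.leaf a : FTree α S).yield = [a] := by rw [FTree.yield]

theorem join_singleton : ∀ w : List α, (w.map (fun a => [a])).flatten = w := by
  intro w
  induction w with
  | nil => simp
  | cons a w ih => simp [ih]

theorem spow_coe (s : S) : ∀ k, (WithOne.coe s) ^ (k+1) = WithOne.coe (spow s k)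
  | 0 => by rw [pow_one]; rfl
  | k+1 => by
      rw [pow_succ, spow_coe s k, ← WithOne.coe_mul]
      rfl

end Final
end FF


/-- Factorisation Forest Theorem, aperiodic case: if `S` is a finite
aperiodic semigroup, then there is a bound `k` depending only on `S` such that for
every `h : Σ → S`, every nonempty word over `Σ` is the yield of some `h`-factorisation
of depth at most `k`. -/
theorem stmt_7 {α S : Type*} [Semigroup S] [Finite S]
    (hap : ∃ m : ℕ, ∀ t : S, spow t m = spow t (m + 1)) :
    ∃ k : ℕ, ∀ (h : α → S) (w : List α), w ≠ [] →
      ∃ t : FTree α S, FTree.Valid h t ∧ FTree.depth t ≤ k ∧ FTree.yield t = w := by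
  classical
  obtain ⟨m, hm⟩ := hap
  haveI := Fintype.ofFinite S
  have hn1 : 1 ≤ m + 1 := by omega
  have hn : ∀ x : WithOne S, x ^ (m+1) = x ^ (m+1+1) := by
    intro x
    induction x using WithOne.recOneCoe with
    | one => simp
    | coe s => rw [FF.spow_coe, FF.spow_coe, hm]
  obtain ⟨kRZ, hRZu⟩ := FF.RZ (α := α) (S := S) Finset.univ
  obtain ⟨kCL, hCLu⟩ := FF.CL (m+1) hn1 hn kRZ
    (fun h d Ts h1 h2 h3 => hRZu h d Ts h1 h2 (fun T _ => Finset.mem_univ _) h3) Finset.univ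
  obtain ⟨kM, hM⟩ := FF.MAIN (m+1) hn1 hn kCL
    (fun h d Ts h1 h2 h3 => hCLu h d Ts h1 h2 (fun T _ => Finset.mem_univ _) h3) Finset.univ
  refine ⟨kM + 1, ?_⟩
  intro h w hw
  set Ts := w.map (fun a => FTree.node (h a) [FTree.leaf a]) with hTs
  have hTsne : Ts ≠ [] := by simpa [hTs] using hw
  have hgood : ∀ T ∈ Ts, FTree.Valid h T ∧ FF.IsNode T ∧ FTree.depth T ≤ 1 := by
    intro T hT
    simp only [hTs, List.mem_map] at hT
    obtain ⟨a, -, rfl⟩ := hT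
    refine ⟨FTree.Valid.leafParent a, FF.isNode_node _ _, ?_⟩
    rw [FF.depth_node]
    simp [FF.depth_leaf]
  have hpc : FF.Pcond h Finset.univ Ts := by
    intro A hA hAne
    obtain ⟨x, hx⟩ := FF.P_exists_coe h A hAne
    exact ⟨x, Finset.mem_univ x, hx⟩
  obtain ⟨Z, hZv, hZn, hZd, hZy, hZl⟩ := hM h 1 Ts hTsne hgood hpc
  refine ⟨Z, hZv, by omega, ?_⟩
  rw [hZy, hTs, List.map_map]
  have hy : ∀ a : α, FTree.yield (FTree.node (h a) [FTree.leaf a]) = [a] := by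
    intro a
    rw [FF.yield_node]
    simp [FF.yield_leaf]
  calc (List.map (FTree.yield ∘ fun a => FTree.node (h a) [FTree.leaf a]) w).flatten
      = (List.map (fun a => [a]) w).flatten := by
        congr 1
        exact List.map_congr_left (fun a _ => hy a)
    _ = w := FF.join_singleton w
end

section
/- A k-register update is nonduplicating if each register name appears at most once in the concatenation of all its right-hand sides, and monotone if in that concatenation (of right-hand sides in order 1 to k) the register names that appear do so in strictly increasing order. The set of nonduplicating monotone k-register updates over a monoid M is closed under the composition of register updates, i.e., it forms a submonoid of the register-update monoid. -/
/-- A `k`-register update over a monoid `M`: a `k`-tuple of words over `M ∪ {1,…,k}`. -/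
abbrev RegUpdate (M : Type*) (k : ℕ) := Fin k → List (M ⊕ Fin k)

/-- Substitution of a single letter: monoid letters are kept, register name `j` is
replaced by the `j`-th right-hand side of `η`. -/
def substLetter {M : Type*} {k : ℕ} (η : RegUpdate M k) : (M ⊕ Fin k) → List (M ⊕ Fin k)
  | .inl m => [.inl m]
  | .inr j => η j

/-- Composition of register updates: `comp η₁ η₂` is obtained from `η₂` by replacing
each occurrence of a register name `j` by the `j`-th right-hand side of `η₁`. -/
def comp {M : Type*} {k : ℕ} (η₁ η₂ : RegUpdate M k) : RegUpdate M k :=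
  fun i => (η₂ i).flatMap (substLetter η₁)

/-- The identity register update, whose `i`-th right-hand side is the single-letter
word `[i]`. -/
def idU {M : Type*} {k : ℕ} : RegUpdate M k := fun i => [.inr i]

/-- Evaluate a word over `M ∪ {1,…,k}` at a register valuation `v`: replace register
name `j` by `v j` and take the product in `M`. -/
def evalWord {M : Type*} [Monoid M] {k : ℕ} (v : Fin k → M) (w : List (M ⊕ Fin k)) : M :=
  (w.map (fun a => match a with | .inl m => m | .inr j => v j)).prod

/-- The right action of a register update on a register valuation. -/
def act {M : Type*} [Monoid M] {k : ℕ} (v : Fin k → M) (η : RegUpdate M k) : Fin k → M :=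
  fun i => evalWord v (η i)

/-- The list of register names occurring in a word, in order. -/
def regNames {M : Type*} {k : ℕ} (w : List (M ⊕ Fin k)) : List (Fin k) :=
  w.filterMap (fun a => match a with | .inl _ => none | .inr j => some j)

/-- The concatenation of all right-hand sides of a register update, in order `1` to `k`. -/
def allRhs {M : Type*} {k : ℕ} (η : RegUpdate M k) : List (M ⊕ Fin k) :=
  (List.ofFn η).flatten

/-- A register update is nonduplicating if each register name appears at most once in
the concatenation of all its right-hand sides. -/
def NonDup {M : Type*} {k : ℕ} (η : RegUpdate M k) : Prop :=
  (regNames (allRhs η)).Nodup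

/-- A register update is monotone if the register names appearing in the concatenation
of its right-hand sides do so in strictly increasing order. -/
def Monot {M : Type*} {k : ℕ} (η : RegUpdate M k) : Prop :=
  List.Pairwise (· < ·) (regNames (allRhs η))

lemma regNames_append {M : Type*} {k : ℕ} (w₁ w₂ : List (M ⊕ Fin k)) :
    regNames (w₁ ++ w₂) = regNames w₁ ++ regNames w₂ :=
  List.filterMap_append

lemma regNames_allRhs {M : Type*} {k : ℕ} (η : RegUpdate M k) :
    regNames (allRhs η) = (List.finRange k).flatMap (fun j => regNames (η j)) := by
  simp [allRhs, regNames, List.filterMap_flatten, List.ofFn_eq_map, List.flatMap_def,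
    List.map_map, Function.comp_def]

lemma flatMap_flatten' {α β : Type*} (L : List (List α)) (f : α → List β) :
    L.flatten.flatMap f = (L.map (fun w => w.flatMap f)).flatten := by
  induction L with
  | nil => rfl
  | cons h t ih => simp [List.flatMap_append, ih]

lemma regNames_comp {M : Type*} {k : ℕ} (η₁ : RegUpdate M k) (w : List (M ⊕ Fin k)) :
    regNames (w.flatMap (substLetter η₁)) = (regNames w).flatMap (fun j => regNames (η₁ j)) := by
  induction w with
  | nil => rfl
  | cons a t ih =>
    cases a with
    | inl m => simpa [regNames, substLetter] using ih
    | inr j =>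
      simp only [List.flatMap_cons, regNames, List.filterMap_cons, substLetter] at *
      simp [List.filterMap_append, ih]

lemma sublist_flatten {α : Type*} {l₁ l₂ : List (List α)} (h : List.Sublist l₁ l₂) :
    List.Sublist l₁.flatten l₂.flatten := by
  induction h with
  | slnil => exact List.Sublist.refl _
  | cons a _ ih => exact ih.trans (List.sublist_append_right a _)
  | cons_cons a _ ih => exact (List.Sublist.refl a).append ih

lemma sublist_flatMap {α β : Type*} {l₁ l₂ : List α} (f : α → List β)
    (h : List.Sublist l₁ l₂) : List.Sublist (l₁.flatMap f) (l₂.flatMap f) := by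
  simpa [List.flatMap_def] using sublist_flatten (h.map f)

lemma regNames_idU {M : Type*} {k : ℕ} :
    regNames (allRhs (idU : RegUpdate M k)) = List.finRange k := by
  rw [regNames_allRhs]
  simp [idU, regNames]

/-- The nonduplicating monotone `k`-register updates form a submonoid of
the register-update monoid: they are closed under composition and contain the identity
update. -/
theorem stmt_12 {M : Type*} [Monoid M] (k : ℕ) (hk : 1 ≤ k) :
    (∀ η₁ η₂ : RegUpdate M k, NonDup η₁ → Monot η₁ → NonDup η₂ → Monot η₂ →
      NonDup (comp η₁ η₂) ∧ Monot (comp η₁ η₂)) ∧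
    (NonDup (idU : RegUpdate M k) ∧ Monot (idU : RegUpdate M k)) := by
  constructor
  · intro η₁ η₂ hn₁ hm₁ hn₂ hm₂
    have hsub : List.Sublist (regNames (allRhs (comp η₁ η₂))) (regNames (allRhs η₁)) := by
      have h2 : List.Sublist (regNames (allRhs η₂)) (List.finRange k) := by
        refine List.sublist_of_subperm_of_pairwise (List.Nodup.subperm hn₂ ?_) hm₂ ?_
        · intro x _; exact List.mem_finRange x
        · exact List.pairwise_lt_finRange k
      have e0 : allRhs (comp η₁ η₂) = (allRhs η₂).flatMap (substLetter η₁) := by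
        rw [allRhs, allRhs, flatMap_flatten', List.map_ofFn]; rfl
      have e1 : regNames (allRhs (comp η₁ η₂))
          = (regNames (allRhs η₂)).flatMap (fun j => regNames (η₁ j)) := by
        rw [e0, regNames_comp]
      rw [e1, regNames_allRhs η₁]
      exact sublist_flatMap _ h2
    exact ⟨hsub.nodup hn₁, hm₁.sublist hsub⟩
  · exact ⟨by rw [NonDup, regNames_idU]; exact List.nodup_finRange k,
      by rw [Monot, regNames_idU]; exact List.pairwise_lt_finRange k⟩
end

section
/- Let h : Σ → T be a map into a finite monoid, extended to a monoid homomorphism h* : Σ* → T. Suppose a function f : Σ* → Σ (a candidate product) satisfies: f agrees with a given associative product π : Σ* → Σ on all pairs (lists of length 2) and on all lists homogeneous under h (all elements have the same h-image). If every nonempty list over Σ admits an h-factorisation tree of depth ≤ k (internal nodes of degree 2 or homogeneous nodes of degree ≥ 3), then π is computable by iterating binary products and homogeneous products along such trees; formally, for every nonempty list w, π(w) equals the value obtained by recursively evaluating any h-factorisation of w using binary product at degree-2 nodes and the homogeneous product at higher-degree nodes. -/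
/-- Finite unranked trees with leaves labelled in `α`. -/
inductive PTree (α : Type*) : Type _ where
  | leaf : α → PTree α
  | node : List (PTree α) → PTree α

namespace PTree

variable {α : Type*}

/-- The yield of a tree: the sequence of leaf labels, read left to right. -/
def yield : PTree α → List α
  | .leaf a => [a]
  | .node ts => (ts.attach.map (fun t => yield t.1)).flatten
decreasing_by have := List.sizeOf_lt_of_mem t.2; simp; omega

/-- The depth of a tree. -/
def depth : PTree α → ℕ
  | .leaf _ => 0
  | .node ts => 1 + (ts.attach.map (fun t => depth t.1)).foldr max 0
decreasing_by have := List.sizeOf_lt_of_mem t.2; simp; omega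

/-- Recursive evaluation of a tree using a candidate product `f`: a leaf evaluates to
its label, and an internal node evaluates to `f` applied to the list of values of its
children. -/
def eval (f : List α → α) : PTree α → α
  | .leaf a => a
  | .node ts => f (ts.attach.map (fun t => eval f t.1))
decreasing_by have := List.sizeOf_lt_of_mem t.2; simp; omega

/-- A tree is an `h`-factorisation (with respect to the product `π` and the map
`h : α → T`) if every internal node either has exactly two children, or has at least
three children whose `π`-values all have the same image under `h`. -/
inductive Ok {T : Type*} (π : List α → α) (h : α → T) : PTree α → Prop
  | leaf (a : α) : Ok π h (.leaf a)
  | node2 (ts : List (PTree α)) :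
      ts.length = 2 → (∀ t ∈ ts, Ok π h t) → Ok π h (.node ts)
  | node3 (ts : List (PTree α)) :
      3 ≤ ts.length → (∀ t ∈ ts, Ok π h t) →
      (∀ t₁ ∈ ts, ∀ t₂ ∈ ts, h (π (yield t₁)) = h (π (yield t₂))) →
      Ok π h (.node ts)

end PTree

/-- Let `h : α → T` map into a finite monoid `T` and let `π` be an
associative product on nonempty lists over `α`. If `f` agrees with `π` on lists of
length 2 and on `h`-homogeneous lists, and every nonempty list admits an
`h`-factorisation tree of depth at most `k`, then evaluating any `h`-factorisation of a
nonempty list `w` recursively with `f` (binary product at degree-2 nodes, homogeneous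
product at higher-degree nodes) computes `π w`. -/
theorem stmt_18 {α T : Type*} [Monoid T] [Finite T]
    (h : α → T) (π : List α → α) (f : List α → α)
    (hπ_single : ∀ a : α, π [a] = a)
    (hπ_assoc : ∀ ws : List (List α), ws ≠ [] → (∀ u ∈ ws, u ≠ []) →
      π ws.flatten = π (ws.map π))
    (hf_pair : ∀ a b : α, f [a, b] = π [a, b])
    (hf_hom : ∀ l : List α, l ≠ [] → (∀ x ∈ l, ∀ y ∈ l, h x = h y) → f l = π l)
    (hdepth : ∃ k : ℕ, ∀ w : List α, w ≠ [] →
      ∃ t : PTree α, PTree.Ok π h t ∧ PTree.depth t ≤ k ∧ PTree.yield t = w) :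
    ∀ (w : List α), w ≠ [] → ∀ t : PTree α,
      PTree.Ok π h t → PTree.yield t = w → PTree.eval f t = π w := by
  have key : ∀ t : PTree α, PTree.Ok π h t →
      PTree.eval f t = π (PTree.yield t) ∧ PTree.yield t ≠ [] := by
    intro t hok
    induction hok with
    | leaf a => simp [PTree.eval, PTree.yield, hπ_single]
    | node2 ts hlen hts ih =>
      match ts, hlen with
      | [t₁, t₂], _ =>
        have h₁ := ih t₁ (by simp)
        have h₂ := ih t₂ (by simp)
        constructor
        · rw [PTree.eval, PTree.yield]
          simp only [List.attach_map_val, List.map_cons, List.map_nil, List.flatten_cons, List.flatten_nil,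
            List.append_nil]
          rw [h₁.1, h₂.1, hf_pair]
          have := hπ_assoc [PTree.yield t₁, PTree.yield t₂] (by simp)
            (by simp [h₁.2, h₂.2])
          simp only [List.map_cons, List.map_nil, List.flatten_cons, List.flatten_nil, List.append_nil] at this
          rw [← this]
        · rw [PTree.yield]
          simp [h₁.2]
    | node3 ts hlen hts hhom ih =>
      have hne : ts ≠ [] := by rintro rfl; simp at hlen
      have hyne : ∀ u ∈ ts.map PTree.yield, u ≠ [] := by
        intro u hu
        obtain ⟨s, hs, rfl⟩ := List.mem_map.1 hu
        exact (ih s hs).2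
      constructor
      · rw [PTree.eval, PTree.yield]
        simp only [List.attach_map_val]
        have hmap : ts.map (PTree.eval f) = ts.map (fun s => π (PTree.yield s)) :=
          List.map_congr_left (fun s hs => (ih s hs).1)
        rw [hmap, hf_hom _ (by simpa using hne)]
        · rw [show ts.map (fun s => π (PTree.yield s)) = (ts.map PTree.yield).map π
              by simp, ← hπ_assoc _ (by simpa using hne) hyne]
        · intro x hx y hy
          obtain ⟨s₁, hs₁, rfl⟩ := List.mem_map.1 hx
          obtain ⟨s₂, hs₂, rfl⟩ := List.mem_map.1 hy
          exact hhom s₁ hs₁ s₂ hs₂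
      · rw [PTree.yield]
        simp only [List.attach_map_val, ne_eq, List.flatten_eq_nil_iff]
        intro hall
        obtain ⟨s, hs⟩ := List.exists_mem_of_ne_nil ts hne
        exact (ih s hs).2 (hall _ (List.mem_map_of_mem hs))
  intro w hw t hok hy
  rw [← hy]; exact (key t hok).1
end
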